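/- arXiv:1312.3911 — 4 statements merged into one kernel-verified Lean document; each statement's English description precedes it below -/
import Mathlib

section
/- Let (X,d) be a metric space, L ≥ 1 and r₀ > 0, and suppose X is (L,r₀)-linearly locally contractible. Then for every x ∈ X and every radius 0 < r < r₀ there exists a connected open set U ⊆ X satisfying B(x, r/(2L)) ⊆ U ⊆ B(x, r). -/
/-!
Take `U` to be the connected component of `x` in `B(x,r)`. Contracting a small ball `B(y,s)`
inside `B(y,Ls)` joins all its points to `y` by connected sets, so `X` is locally connected and
`U` is open; contracting `B(x, r/(2L))` inside `B(x, r/2)` puts that ball into `U`.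
-/

open Metric

/-- A metric space `X` is `(L, r₀)`-linearly locally contractible if every open ball of
radius `r < r₀` is contractible inside the concentric ball of radius `L * r`: there is a
continuous homotopy `H : B(x,r) × [0,1] → X`, taking values in `B(x, L*r)`, with
`H(·,0)` the inclusion and `H(·,1)` a constant map. -/
def LLC (X : Type) [MetricSpace X] (L r₀ : ℝ) : Prop :=
  ∀ (x : X) (r : ℝ), 0 < r → r < r₀ →
    ∃ H : ↥(Metric.ball x r) × ↥(Set.Icc (0:ℝ) 1) → X,
      Continuous H ∧
      (∀ y : ↥(Metric.ball x r), H (y, ⟨0, Set.left_mem_Icc.2 zero_le_one⟩) = (y : X)) ∧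
      (∃ c : X, ∀ y : ↥(Metric.ball x r), H (y, ⟨1, Set.right_mem_Icc.2 zero_le_one⟩) = c) ∧
      (∀ p, H p ∈ Metric.ball x (L * r))

namespace LLC

variable {X : Type} [MetricSpace X] {L r₀ : ℝ}

/-- The tracks `t ↦ H (z, t)` of a contraction join every point of `B(x,s)` to the common
endpoint `c` inside `B(x, L*s)`, so they all lie in one component of `B(x, L*s)`. -/
theorem ball_subset_connectedComponentIn (h : LLC X L r₀) (x : X) {s : ℝ} (hs : 0 < s)
    (hsr₀ : s < r₀) : ball x s ⊆ connectedComponentIn (ball x (L * s)) x := by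
  obtain ⟨H, hH, hH₀, ⟨c, hH₁⟩, hH_mem⟩ := h x s hs hsr₀
  have track_mem (z : ball x s) : (z : X) ∈ connectedComponentIn (ball x (L * s)) c :=
    (isPreconnected_range (hH.comp (Continuous.prodMk_right z))).subset_connectedComponentIn
      ⟨_, hH₁ z⟩ (Set.range_subset_iff.2 fun _ => hH_mem _) ⟨_, hH₀ z⟩
  have hx := track_mem ⟨x, mem_ball_self hs⟩
  rw [connectedComponentIn_eq hx] at track_mem
  exact fun y hy => track_mem ⟨y, hy⟩

theorem locallyConnectedSpace (h : LLC X L r₀) (hL : 0 < L) (hr₀ : 0 < r₀) :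
    LocallyConnectedSpace X := by
  rw [locallyConnectedSpace_iff_connected_subsets]
  intro y U hU
  obtain ⟨ε, hε, hεU⟩ := Metric.mem_nhds_iff.1 hU
  set s := min (ε / L) (r₀ / 2)
  have hs : 0 < s := lt_min (div_pos hε hL) (half_pos hr₀)
  have hLs : L * s ≤ ε := (le_div_iff₀' hL).1 (min_le_left _ _)
  refine ⟨connectedComponentIn U y, Metric.mem_nhds_iff.2 ⟨s, hs, ?_⟩,
    isPreconnected_connectedComponentIn, connectedComponentIn_subset _ _⟩
  have hsr₀ : s < r₀ := (min_le_right _ _).trans_lt (half_lt_self hr₀)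
  exact (h.ball_subset_connectedComponentIn y hs hsr₀).trans
    (connectedComponentIn_mono _ ((ball_subset_ball hLs).trans hεU))

end LLC

/-- If `X` is `(L,r₀)`-LLC then for every `x ∈ X` and every `0 < r < r₀` there is a
connected open set `U` with `B(x, r/(2L)) ⊆ U ⊆ B(x,r)`. -/
theorem llc_exists_connected_open (X : Type) [MetricSpace X] (L r₀ : ℝ)
    (hL : 1 ≤ L) (hr₀ : 0 < r₀) (h : LLC X L r₀)
    (x : X) (r : ℝ) (hr : 0 < r) (hrr₀ : r < r₀) :
    ∃ U : Set X, IsOpen U ∧ IsConnected U ∧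
      Metric.ball x (r / (2 * L)) ⊆ U ∧ U ⊆ Metric.ball x r := by
  have hL₀ : 0 < L := zero_lt_one.trans_le hL
  have := h.locallyConnectedSpace hL₀ hr₀
  refine ⟨connectedComponentIn (ball x r) x, isOpen_ball.connectedComponentIn,
    isConnected_connectedComponentIn_iff.2 (mem_ball_self hr), ?_,
    connectedComponentIn_subset _ _⟩
  have hs : 0 < r / (2 * L) := by positivity
  have hsr : r / (2 * L) ≤ r := div_le_self hr.le (by linarith)
  have hLs : L * (r / (2 * L)) = r / 2 := by field_simp
  exact (h.ball_subset_connectedComponentIn x hs (hsr.trans_lt hrr₀)).trans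
    (connectedComponentIn_mono _ (ball_subset_ball (hLs.trans_le (half_le_self hr.le))))
end

section
/- Assume the direct-system setup with the interleaving hypothesis (H) and properties (S) and (K). Then the canonical map i_2 : F_2 → F_∞ is surjective. -/
/-!
Write `z = i n x` and interleave up to level `n + 2`. By (S) some `y ∈ G^k_1` has the same
image in `G^k_∞` as `a_n x`; by (K) the two already agree in `G^k_{n+2}`. Pushing `y` through
`b` and using naturality of `b` and `b ∘ a = i_{n,n+2}` shows that `b_1 y ∈ F_2` maps to `z`.
-/

theorem map_transition_eq_transition_map {F G : ℕ → Type*} [∀ n, AddZeroClass (F n)]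
    [∀ n, AddZeroClass (G n)] {i2 : ∀ n m : ℕ, n ≤ m → F n →+ F m}
    {j2 : ∀ n m : ℕ, n ≤ m → G n →+ G m}
    (hFcomp : ∀ (n m l : ℕ) (h1 : n ≤ m) (h2 : m ≤ l) (x : F n),
      i2 m l h2 (i2 n m h1 x) = i2 n l (h1.trans h2) x)
    (hGcomp : ∀ (n m l : ℕ) (h1 : n ≤ m) (h2 : m ≤ l) (y : G n),
      j2 m l h2 (j2 n m h1 y) = j2 n l (h1.trans h2) y)
    (b : ∀ n, G n →+ F (n + 1)) {p q : ℕ}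
    (hb : ∀ n, p ≤ n → n < q → ∀ y : G n,
      b (n + 1) (j2 n (n + 1) n.le_succ y) = i2 (n + 1) (n + 2) (n + 1).le_succ (b n y))
    {m : ℕ} (hpm : p < m) (hmq : m ≤ q) (y : G p) :
    b m (j2 p m hpm.le y) = i2 (p + 1) (m + 1) (by omega) (b p y) := by
  induction m, hpm using Nat.le_induction with
  | base => exact hb p le_rfl (by omega) y
  | succ m hpm ih =>
    rw [← hGcomp p m (m + 1) (by omega) m.le_succ, hb m (by omega) (by omega),
      ih (by omega), hFcomp]

theorem exists_transition_eq_transition_succ {G : ℕ → Type*} [∀ n, AddCommGroup (G n)]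
    {Ginf : Type*} [AddCommGroup Ginf] {j2 : ∀ n m : ℕ, n ≤ m → G n →+ G m}
    {j : ∀ n, G n →+ Ginf}
    (hGcomp : ∀ (n m l : ℕ) (h1 : n ≤ m) (h2 : m ≤ l) (y : G n),
      j2 m l h2 (j2 n m h1 y) = j2 n l (h1.trans h2) y)
    (hjcompat : ∀ (n m : ℕ) (h : n ≤ m) (y : G n), j m (j2 n m h y) = j n y)
    {p m : ℕ} (hpm : p ≤ m) (hS : Function.Surjective (j p))
    (hK : ∀ y : G m, j m y = 0 → j2 m (m + 1) m.le_succ y = 0) (y' : G m) :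
    ∃ y : G p, j2 p (m + 1) (hpm.trans m.le_succ) y = j2 m (m + 1) m.le_succ y' := by
  obtain ⟨y, hy⟩ := hS (j m y')
  refine ⟨y, ?_⟩
  have hker : j m (j2 p m hpm y - y') = 0 := by rw [map_sub, hjcompat, hy, sub_self]
  rw [← hGcomp p m (m + 1) hpm m.le_succ, ← sub_eq_zero, ← map_sub]
  exact hK _ hker

/-- Claim 3.2 of the paper (surjectivity of `i₂ : F₂ → F∞`), under the direct-system
setup with the interleaving hypothesis (H) and properties (S) and (K). -/
theorem i_two_surjective
    (F : ℕ → Type) [∀ n, AddCommGroup (F n)]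
    (Finf : Type) [AddCommGroup Finf]
    (i2 : ∀ n m : ℕ, n ≤ m → (F n →+ F m))
    (i : ∀ n, F n →+ Finf)
    (hFcomp : ∀ (n m l : ℕ) (h1 : n ≤ m) (h2 : m ≤ l) (x : F n),
      i2 m l h2 (i2 n m h1 x) = i2 n l (h1.trans h2) x)
    (hicompat : ∀ (n m : ℕ) (h : n ≤ m) (x : F n), i m (i2 n m h x) = i n x)
    (hiexh : ∀ z : Finf, ∃ (n : ℕ) (x : F n), i n x = z)
    (G : ℕ → ℕ → Type) [∀ k n, AddCommGroup (G k n)]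
    (Ginf : ℕ → Type) [∀ k, AddCommGroup (Ginf k)]
    (j2 : ∀ (k n m : ℕ), n ≤ m → (G k n →+ G k m))
    (j : ∀ k n, G k n →+ Ginf k)
    (hGcomp : ∀ (k n m l : ℕ) (h1 : n ≤ m) (h2 : m ≤ l) (y : G k n),
      j2 k m l h2 (j2 k n m h1 y) = j2 k n l (h1.trans h2) y)
    (hjcompat : ∀ (k n m : ℕ) (h : n ≤ m) (y : G k n), j k m (j2 k n m h y) = j k n y)
    (hH : ∀ n₀ : ℕ, ∃ (k : ℕ) (a : ∀ n, F n →+ G k (n+1)) (b : ∀ n, G k n →+ F (n+1)),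
      (∀ n, n + 1 ≤ n₀ → ∀ x : F n,
        a (n+1) (i2 n (n+1) (by omega) x) = j2 k (n+1) (n+2) (by omega) (a n x)) ∧
      (∀ n, n + 1 ≤ n₀ → ∀ y : G k n,
        b (n+1) (j2 k n (n+1) (by omega) y) = i2 (n+1) (n+2) (by omega) (b n y)) ∧
      (∀ n, n + 1 ≤ n₀ → ∀ x : F n, b (n+1) (a n x) = i2 n (n+2) (by omega) x) ∧
      (∀ n, n + 1 ≤ n₀ → ∀ y : G k n, a (n+1) (b n y) = j2 k n (n+2) (by omega) y))
    (hS : ∀ k n, Function.Surjective (j k n))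
    (hK : ∀ (k n : ℕ) (y : G k n), j k n y = 0 → j2 k n (n+1) (by omega) y = 0)
    : Function.Surjective (i 2) := by
  intro z
  obtain ⟨n, x, rfl⟩ := hiexh z
  obtain ⟨k, a, b, -, hb, hba, -⟩ := hH (n + 2)
  obtain ⟨y, hy⟩ := exists_transition_eq_transition_succ (hGcomp k) (hjcompat k)
    (by omega : 1 ≤ n + 1) (hS k 1) (hK k (n + 1)) (a n x)
  have hnat := map_transition_eq_transition_map hFcomp (hGcomp k) b (p := 1) (q := n + 2)
    (fun m _ hm => hb m (by omega)) (m := n + 2) (by omega) le_rfl y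
  refine ⟨b 1 y, ?_⟩
  calc i 2 (b 1 y) = i (n + 3) (i2 2 (n + 3) (by omega) (b 1 y)) := (hicompat _ _ _ _).symm
    _ = i (n + 3) (i2 (n + 2) (n + 3) (by omega) (b (n + 1) (a n x))) := by
      rw [← hnat, hy, hb (n + 1) le_rfl]
    _ = i n x := by rw [hicompat, hba n (by omega), hicompat]
end

section
/- Let 0 < c ≤ C be constants and let g : ℝ → ℝ² satisfy c|x−y|^{1/2} ≤ ‖g(x) − g(y)‖ ≤ C|x−y|^{1/2} for all x, y ∈ ℝ. Then g is not surjective onto ℝ². Equivalently, there is no bi-Lipschitz homeomorphism from the snowflaked real line (ℝ, d_½) onto the Euclidean plane. -/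
/-!
A surjective `g` with a lower bound `c |x - y| ^ (1/2) ≤ ‖g x - g y‖` has a right inverse that is
uniformly continuous (indeed `2`-Hölder), and it is injective. But there is no continuous injection
`f : ℝ² → ℝ`: for `f a < f b`, the intermediate value theorem gives `q` with `f q` strictly in between,
and applied again on the connected set `ℝ² \ {q}` it gives a second point with the value `f q`.
-/

open Function

theorem RightInverse.uniformContinuous_of_le_dist_rpow {X Y : Type*} [PseudoMetricSpace X]
    [PseudoMetricSpace Y] {g : X → Y} {h : Y → X} (hgh : RightInverse h g) {c α : ℝ}
    (hc : 0 < c) (hα : 0 < α) (hlow : ∀ x y, c * dist x y ^ α ≤ dist (g x) (g y)) :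
    UniformContinuous h := by
  rw [Metric.uniformContinuous_iff]
  intro ε hε
  refine ⟨c * ε ^ α, by positivity, fun {u v} huv => ?_⟩
  have hpow : dist (h u) (h v) ^ α < ε ^ α := by
    have := hlow (h u) (h v)
    rw [hgh u, hgh v] at this
    exact lt_of_mul_lt_mul_left (this.trans_lt huv) hc.le
  exact (Real.rpow_lt_rpow_iff dist_nonneg hε.le hα).mp hpow

theorem Continuous.not_injective_of_isPreconnected_compl_singleton {X α : Type*}
    [TopologicalSpace X] [PreconnectedSpace X] [Nontrivial X] [LinearOrder α] [DenselyOrdered α]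
    [TopologicalSpace α] [OrderClosedTopology α] (hX : ∀ x : X, IsPreconnected ({x}ᶜ : Set X))
    {f : X → α} (hf : Continuous f) : ¬ Injective f := by
  intro hinj
  obtain ⟨a, b, hab⟩ := exists_pair_ne X
  wlog hlt : f a < f b generalizing a b
  · exact this b a hab.symm ((hinj.ne hab).lt_or_gt.resolve_left hlt)
  obtain ⟨m, ham, hmb⟩ := exists_between hlt
  obtain ⟨q, rfl⟩ := intermediate_value_univ a b hf ⟨ham.le, hmb.le⟩
  obtain ⟨r, hrq, hfr⟩ := (hX q).intermediate_value (a := a) (b := b)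
    (fun h => ham.ne (congrArg f h)) (fun h => hmb.ne' (congrArg f h)) hf.continuousOn
    ⟨ham.le, hmb.le⟩
  exact hrq (hinj hfr)

theorem snowflake_bilipschitz_not_surjective_general (c : ℝ) (hc : 0 < c)
    (g : ℝ → EuclideanSpace ℝ (Fin 2))
    (hlow : ∀ x y : ℝ, c * |x - y| ^ ((1 : ℝ) / 2) ≤ ‖g x - g y‖) :
    ¬ Function.Surjective g := by
  intro hsurj
  have hcont : Continuous (surjInv hsurj) :=
    (RightInverse.uniformContinuous_of_le_dist_rpow (rightInverse_surjInv hsurj) hc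
      (by norm_num : (0 : ℝ) < 1 / 2)
      fun x y => by rw [Real.dist_eq, dist_eq_norm]; exact hlow x y).continuous
  have hrank : 1 < Module.rank ℝ (EuclideanSpace ℝ (Fin 2)) := by
    rw [← Module.finrank_eq_rank, finrank_euclideanSpace_fin]
    norm_num
  exact hcont.not_injective_of_isPreconnected_compl_singleton
    (fun v => (isConnected_compl_singleton_of_one_lt_rank hrank v).isPreconnected)
    (injective_surjInv hsurj)

/-- No map `g : ℝ → ℝ²` satisfying `c|x-y|^(1/2) ≤ ‖g x - g y‖ ≤ C|x-y|^(1/2)` (i.e. no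
bi-Lipschitz map from the snowflaked real line to the Euclidean plane) is surjective. -/
theorem snowflake_bilipschitz_not_surjective (c C : ℝ) (hc : 0 < c) (hcC : c ≤ C)
    (g : ℝ → EuclideanSpace ℝ (Fin 2))
    (hlow : ∀ x y : ℝ, c * |x - y| ^ ((1 : ℝ) / 2) ≤ ‖g x - g y‖)
    (hup : ∀ x y : ℝ, ‖g x - g y‖ ≤ C * |x - y| ^ ((1 : ℝ) / 2)) :
    ¬ Function.Surjective g :=
  snowflake_bilipschitz_not_surjective_general c hc g hlow
end

section
/- Let E ⊆ ℝ be a Lebesgue measurable set of positive Lebesgue measure and let 0 < c ≤ C be constants. Then there is no map g : E → ℝ² satisfying c|x−y|^{1/2} ≤ ‖g(x) − g(y)‖ ≤ C|x−y|^{1/2} for all x, y ∈ E. In other words, no map from the snowflaked real line to the Euclidean plane is bi-Lipschitz on any set of positive Lebesgue measure. -/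
open MeasureTheory Metric Set Function
open scoped NNReal

/-!
Let `f` be the inverse of `g` on `K = g(E)`; it satisfies
`(‖p - q‖ / C)² ≤ |f p - f q| ≤ (‖p - q‖ / c)²`. The upper bound makes `f` 2-Hölder, so
`E = f(K)` can have positive length only if `K` has positive area. The two bounds together
make `K` porous along segments: if `K` came within `|a - b| / 2N` of every point of a segment
`[a, b]`, a chain of `N + 1` points of `K` following the segment would have steps of size
`≤ 2|a - b| / N`, so `|f p₀ - f p_N| ≤ N (2|a - b| / Nc)²`, whereas the lower bound gives
`|f p₀ - f p_N| ≥ (|a - b| / 2C)²`; this fails for large `N`. But near a Lebesgue density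
point of `K` every point of a short segment is close to `K`, so `K` has measure zero.
-/

variable {V : Type*} [NormedAddCommGroup V] [NormedSpace ℝ V]

def SegmentPorous (K : Set V) : Prop :=
  ∃ η > 0, ∀ a b : V, a ≠ b → ¬ segment ℝ a b ⊆ thickening (η * dist a b) K

lemma exists_chain_of_segment_subset_thickening {K : Set V} {a b : V} {δ : ℝ}
    (h : segment ℝ a b ⊆ thickening δ K) {N : ℕ} (hN : 0 < N) :
    ∃ p : ℕ → V, (∀ k ≤ N, p k ∈ K) ∧
      (∀ k < N, dist (p k) (p (k + 1)) < dist a b / N + 2 * δ) ∧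
      dist a b - 2 * δ < dist (p 0) (p N) := by
  set z : ℕ → V := fun k => AffineMap.lineMap a b ((k : ℝ) / N)
  have hN' : (0 : ℝ) < N := Nat.cast_pos.2 hN
  have hz : ∀ k ≤ N, ∃ q ∈ K, dist (z k) q < δ := fun k hk =>
    mem_thickening_iff.1 <| h <| (segment_eq_image_lineMap ℝ a b).symm ▸
      mem_image_of_mem _ ⟨by positivity, div_le_one_of_le₀ (by exact_mod_cast hk) hN'.le⟩
  choose! p hpK hpz using hz
  have hzz : ∀ k l, dist (z k) (z l) = |(k : ℝ) - l| / N * dist a b := fun k l => by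
    simp only [z, dist_lineMap_lineMap, Real.dist_eq, ← sub_div, abs_div, abs_of_pos hN']
  refine ⟨p, hpK, fun k hk => ?_, ?_⟩
  · have hstep : dist (z k) (z (k + 1)) = dist a b / N := by
      rw [hzz]; push_cast; rw [sub_add_cancel_left, abs_neg, abs_one]; ring
    calc dist (p k) (p (k + 1))
        ≤ dist (p k) (z k) + dist (z k) (z (k + 1)) + dist (z (k + 1)) (p (k + 1)) :=
          dist_triangle4 _ _ _ _
      _ < δ + dist a b / N + δ := by
          rw [dist_comm (p k), hstep]
          gcongr
          · exact hpz k hk.le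
          · exact hpz (k + 1) hk
      _ = dist a b / N + 2 * δ := by ring
  · have hends : dist (z 0) (z N) = dist a b := by
      rw [hzz]; field_simp; simp [abs_of_pos hN']
    have := dist_triangle4 (z 0) (p 0) (p N) (z N)
    rw [hends, dist_comm (p N)] at this
    linarith [hpz 0 (Nat.zero_le N), hpz N le_rfl]

lemma segmentPorous_of_sq_dist_le {X : Type*} [PseudoMetricSpace X] {K : Set V} {f : V → X}
    {c C : ℝ} (hc : 0 < c) (hC : 0 < C)
    (hf : ∀ p ∈ K, ∀ q ∈ K,
      (dist p q / C) ^ 2 ≤ dist (f p) (f q) ∧ dist (f p) (f q) ≤ (dist p q / c) ^ 2) :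
    SegmentPorous K := by
  obtain ⟨N, hN⟩ := exists_nat_gt (max 2 (16 * (C / c) ^ 2))
  have hN2 : (2 : ℝ) < N := (le_max_left _ _).trans_lt hN
  have hNC : 16 * (C / c) ^ 2 < N := (le_max_right _ _).trans_lt hN
  have hN0 : 0 < N := by exact_mod_cast (show (0 : ℝ) < N by linarith)
  refine ⟨1 / (2 * N), by positivity, fun a b hab hseg => ?_⟩
  obtain ⟨p, hpK, hstep, hends⟩ := exists_chain_of_segment_subset_thickening hseg hN0
  set L := dist a b
  have hL : 0 < L := dist_pos.2 hab
  have hδ : 2 * (1 / (2 * N) * L) = L / N := by field_simp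
  rw [hδ] at hstep hends
  have hhalf : L / N ≤ L / 2 := div_le_div_of_nonneg_left hL.le two_pos hN2.le
  have hlower : (L / 2 / C) ^ 2 ≤ dist (f (p 0)) (f (p N)) := by
    refine le_trans ?_ (hf _ (hpK 0 N.zero_le) _ (hpK N le_rfl)).1
    gcongr
    linarith
  have hupper : dist (f (p 0)) (f (p N)) ≤ N * (2 * L / N / c) ^ 2 := by
    calc dist (f (p 0)) (f (p N))
        ≤ ∑ k ∈ Finset.range N, dist (f (p k)) (f (p (k + 1))) :=
          dist_le_range_sum_dist (fun k => f (p k)) N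
      _ ≤ ∑ _k ∈ Finset.range N, (2 * L / N / c) ^ 2 := by
          refine Finset.sum_le_sum fun k hk => ?_
          rw [Finset.mem_range] at hk
          refine (hf _ (hpK k hk.le) _ (hpK (k + 1) hk)).2.trans ?_
          gcongr
          exact (hstep k hk).le.trans_eq (by ring)
      _ = N * (2 * L / N / c) ^ 2 := by simp
  have key := hlower.trans hupper
  field_simp at key hNC
  nlinarith

section AddHaar

variable [FiniteDimensional ℝ V] [Nontrivial V] [MeasurableSpace V] [BorelSpace V]
  (μ : Measure V) [μ.IsAddHaarMeasure]

lemma measure_inter_closedBall_le_of_notMem_thickening {K : Set V} {x z : V} {r θ : ℝ}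
    (hθ : 0 ≤ θ) (hz : ball z (θ * r) ⊆ closedBall x r) (hzK : z ∉ thickening (θ * r) K) :
    μ (K ∩ closedBall x r) ≤
      (1 - ENNReal.ofReal (θ ^ Module.finrank ℝ V)) * μ (closedBall x r) := by
  have hsub : K ∩ closedBall x r ⊆ closedBall x r \ ball z (θ * r) :=
    fun p ⟨hpK, hp⟩ => ⟨hp, fun hpz => hzK (mem_thickening_iff.2 ⟨p, hpK, by
      rw [dist_comm]; exact mem_ball.1 hpz⟩)⟩
  have hball :
      μ (ball z (θ * r)) = ENNReal.ofReal (θ ^ Module.finrank ℝ V) * μ (closedBall x r) := by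
    rw [Measure.addHaar_ball_mul μ z hθ, Measure.addHaar_closedBall_eq_addHaar_ball,
      Measure.addHaar_ball_center μ x]
  calc μ (K ∩ closedBall x r) ≤ μ (closedBall x r \ ball z (θ * r)) := measure_mono hsub
    _ = μ (closedBall x r) - μ (ball z (θ * r)) :=
        measure_sdiff hz measurableSet_ball.nullMeasurableSet measure_ball_lt_top.ne
    _ = _ := by
        rw [hball, ENNReal.sub_mul fun _ _ => measure_closedBall_lt_top.ne, one_mul]

lemma exists_closedBall_subset_thickening {K : Set V} (hK : μ K ≠ 0) {η : ℝ} (hη : 0 < η) :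
    ∃ x, ∃ s > 0, closedBall x s ⊆ thickening (η * s) K := by
  have : (ae (μ.restrict K)).NeBot := ae_neBot.2 (by rwa [Ne, Measure.restrict_eq_zero])
  obtain ⟨x, hx⟩ := (Besicovitch.ae_tendsto_measure_inter_div μ K).exists
  set θ := η / (1 + η)
  have hθ : 0 < θ := by positivity
  set ε := ENNReal.ofReal (θ ^ Module.finrank ℝ V)
  have hε : 1 - ε < 1 := ENNReal.sub_lt_self ENNReal.one_ne_top one_ne_zero
    (ENNReal.ofReal_pos.2 (by positivity)).ne'
  obtain ⟨r, hr_ratio, hr : 0 < r⟩ :=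
    ((hx.eventually (lt_mem_nhds hε)).and self_mem_nhdsWithin).exists
  have hθr : θ * r = η * (r / (1 + η)) := by ring
  refine ⟨x, r / (1 + η), by positivity, fun z hz => ?_⟩
  by_contra hzK
  rw [← hθr] at hzK
  have hzr : ball z (θ * r) ⊆ closedBall x r := fun w hw => by
    have : θ * r + r / (1 + η) = r := by rw [hθr]; field_simp; ring
    rw [mem_closedBall] at hz ⊢
    linarith [dist_triangle w z x, mem_ball.1 hw]
  have hlt := (ENNReal.lt_div_iff_mul_lt (Or.inl (measure_closedBall_pos μ x hr).ne')
    (Or.inl measure_closedBall_lt_top.ne)).1 hr_ratio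
  exact (measure_inter_closedBall_le_of_notMem_thickening μ hθ.le hzr hzK).not_gt hlt

theorem SegmentPorous.measure_eq_zero {K : Set V} (hK : SegmentPorous K) : μ K = 0 := by
  obtain ⟨η, hη, hK⟩ := hK
  by_contra h
  obtain ⟨x, s, hs, hsub⟩ := exists_closedBall_subset_thickening μ h hη
  obtain ⟨u, hu⟩ := exists_norm_eq V zero_le_one
  have hxb : dist x (x + s • u) = s := by
    rw [dist_self_add_right, norm_smul, hu, mul_one, Real.norm_of_nonneg hs.le]
  refine hK x (x + s • u) (fun h => hs.ne' (by rw [← hxb, ← h, dist_self])) ?_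
  rw [hxb]
  refine ((convex_closedBall x s).segment_subset (mem_closedBall_self hs.le) ?_).trans hsub
  exact mem_closedBall'.2 hxb.le

end AddHaar

lemma le_div_sq_of_mul_rpow_half_le {a c D : ℝ} (hc : 0 < c) (h : c * a ^ (1 / 2 : ℝ) ≤ D) :
    a ≤ (D / c) ^ 2 := by
  rw [← Real.sqrt_eq_rpow, ← le_div_iff₀' hc] at h
  exact (Real.sqrt_le_left ((Real.sqrt_nonneg a).trans h)).1 h

lemma div_sq_le_of_le_mul_rpow_half {a C D : ℝ} (ha : 0 ≤ a) (hD : 0 ≤ D) (hC : 0 < C)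
    (h : D ≤ C * a ^ (1 / 2 : ℝ)) : (D / C) ^ 2 ≤ a := by
  rw [← Real.sqrt_eq_rpow, ← div_le_iff₀' hC] at h
  exact (Real.le_sqrt (by positivity) ha).1 h

lemma exists_leftInverse_of_snowflake {X Y : Type*} [MetricSpace X] [PseudoMetricSpace Y]
    [Nonempty X] {g : X → Y} {c C : ℝ} (hc : 0 < c) (hC : 0 < C)
    (hg : ∀ x y, c * dist x y ^ (1 / 2 : ℝ) ≤ dist (g x) (g y) ∧
      dist (g x) (g y) ≤ C * dist x y ^ (1 / 2 : ℝ)) :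
    ∃ f : Y → X, LeftInverse f g ∧ ∀ p ∈ range g, ∀ q ∈ range g,
      (dist p q / C) ^ 2 ≤ dist (f p) (f q) ∧ dist (f p) (f q) ≤ (dist p q / c) ^ 2 := by
  have hbounds : ∀ x y, (dist (g x) (g y) / C) ^ 2 ≤ dist x y ∧
      dist x y ≤ (dist (g x) (g y) / c) ^ 2 := fun x y =>
    ⟨div_sq_le_of_le_mul_rpow_half dist_nonneg dist_nonneg hC (hg x y).2,
      le_div_sq_of_mul_rpow_half_le hc (hg x y).1⟩
  have hinj : Injective g := fun x y hxy =>
    dist_le_zero.1 <| by simpa [hxy, hc.ne'] using (hbounds x y).2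
  refine ⟨invFun g, leftInverse_invFun hinj, ?_⟩
  rintro _ ⟨x, rfl⟩ _ ⟨y, rfl⟩
  simpa only [leftInverse_invFun hinj _] using hbounds x y

lemma holderOnWith_two_of_dist_le_sq_div {X Y : Type*} [PseudoMetricSpace X]
    [PseudoMetricSpace Y] {f : X → Y} {s : Set X} {c : ℝ} (hc : 0 < c)
    (h : ∀ x ∈ s, ∀ y ∈ s, dist (f x) (f y) ≤ (dist x y / c) ^ 2) :
    HolderOnWith (c.toNNReal⁻¹ ^ 2) 2 f s := by
  intro x hx y hy
  rw [edist_dist, edist_dist, NNReal.coe_ofNat, ENNReal.rpow_two]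
  calc ENNReal.ofReal (dist (f x) (f y)) ≤ ENNReal.ofReal ((dist x y / c) ^ 2) :=
        ENNReal.ofReal_le_ofReal (h x hx y hy)
    _ = _ := by
        rw [div_pow, div_eq_inv_mul, ← inv_pow, ENNReal.ofReal_mul (by positivity),
          ENNReal.ofReal_pow (by positivity), ENNReal.ofReal_pow dist_nonneg,
          ENNReal.ofReal_inv_of_pos hc, ENNReal.coe_pow, ENNReal.coe_inv (by simpa using hc)]
        rfl

lemma HolderOnWith.hausdorffMeasure_image_eq_zero {X Y : Type*} [EMetricSpace X]
    [EMetricSpace Y] [MeasurableSpace X] [BorelSpace X] [MeasurableSpace Y] [BorelSpace Y]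
    {C r : ℝ≥0} {f : X → Y} {s : Set X} (h : HolderOnWith C r f s) (hr : 0 < r) {d : ℝ}
    (hd : 0 ≤ d) (hs : μH[r * d] s = 0) : μH[d] (f '' s) = 0 :=
  nonpos_iff_eq_zero.1 <| (h.hausdorffMeasure_image_le hr hd).trans_eq (by rw [hs, mul_zero])

theorem no_bilipschitz_on_positive_measure_general (E : Set ℝ)
    (hpos : 0 < MeasureTheory.volume E) (c C : ℝ) (hc : 0 < c) (hcC : c ≤ C) :
    ¬ ∃ g : E → EuclideanSpace ℝ (Fin 2), ∀ x y : E,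
        c * |(x : ℝ) - (y : ℝ)| ^ ((1 : ℝ) / 2) ≤ ‖g x - g y‖ ∧
        ‖g x - g y‖ ≤ C * |(x : ℝ) - (y : ℝ)| ^ ((1 : ℝ) / 2) := by
  rintro ⟨g, hg⟩
  have hC : 0 < C := hc.trans_le hcC
  have : Nonempty E := (nonempty_of_measure_ne_zero hpos.ne').to_subtype
  obtain ⟨f, hfg, hf⟩ := exists_leftInverse_of_snowflake hc hC (g := g) fun x y => by
    simpa only [Subtype.dist_eq, dist_eq_norm, Real.norm_eq_abs] using hg x y
  have hnull : μH[2] (range g) = 0 := by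
    simpa using (segmentPorous_of_sq_dist_le hc hC hf).measure_eq_zero
      μH[Module.finrank ℝ (EuclideanSpace ℝ (Fin 2))]
  have himage : (Subtype.val ∘ f) '' range g = E := by
    rw [← range_comp, comp_assoc, hfg.comp_eq_id, comp_id, Subtype.range_coe]
  have hholder : HolderOnWith _ 2 (Subtype.val ∘ f) (range g) :=
    holderOnWith_two_of_dist_le_sq_div hc fun p hp q hq => (hf p hp q hq).2
  refine hpos.ne' ?_
  rw [← himage, ← hausdorffMeasure_real]
  exact hholder.hausdorffMeasure_image_eq_zero two_pos zero_le_one (by simpa using hnull)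

/-- If `E ⊆ ℝ` is measurable with positive Lebesgue measure and `0 < c ≤ C`, then there is
no map `g : E → ℝ²` with `c|x-y|^(1/2) ≤ ‖g x - g y‖ ≤ C|x-y|^(1/2)` for all `x, y ∈ E`;
i.e. no map from the snowflaked real line to the Euclidean plane is bi-Lipschitz on a set
of positive Lebesgue measure. -/
theorem no_bilipschitz_on_positive_measure (E : Set ℝ) (hE : MeasurableSet E)
    (hpos : 0 < MeasureTheory.volume E) (c C : ℝ) (hc : 0 < c) (hcC : c ≤ C) :
    ¬ ∃ g : E → EuclideanSpace ℝ (Fin 2), ∀ x y : E,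
        c * |(x : ℝ) - (y : ℝ)| ^ ((1 : ℝ) / 2) ≤ ‖g x - g y‖ ∧
        ‖g x - g y‖ ≤ C * |(x : ℝ) - (y : ℝ)| ^ ((1 : ℝ) / 2) :=
  no_bilipschitz_on_positive_measure_general E hpos c C hc hcC
end
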